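/- Assume t' ∈ π(j), t' ∈ π(j'), j ≠ j', and t' is labelled λx̄ for some x̄. If π(j0), π(i1,j1), …, π(in,jn) is the b-partition for π(j) and π(j'0), π(i'1,j'1), …, π(i'n,j'n) is the b-partition for π(j'), then there is a k with 1 ≤ k ≤ n such that ik = i'k and jk ≠ j'k, and for all m < k, im = i'm and jm = j'm. -/

import Mathlib

set_option autoImplicit false

/-! ## Simple types over a single base type -/

inductive Ty : Type
  | base : Ty
  | arr : Ty → Ty → Ty
  deriving DecidableEq

/-- The order of a simple type. -/
def Ty.order : Ty → ℕ
  | .base => 1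
  | .arr A B => max (A.order + 1) B.order

/-- The number of top-level arguments (the width) of a type. -/
def Ty.arity : Ty → ℕ
  | .base => 0
  | .arr _ B => B.arity + 1

/-- The argument types `A₁,…,Aₙ` of `(A₁,…,Aₙ,0)`. -/
def Ty.args : Ty → List Ty
  | .base => []
  | .arr A B => A :: B.args

/-- The largest width of any subtype of a type. -/
def Ty.subWidth : Ty → ℕ
  | .base => 0
  | .arr A B => max (Ty.arity (.arr A B)) (max A.subWidth B.subWidth)

/-! ## Simply typed λ-terms with named, typed variables and constants -/

inductive Tm : Type
  | var : ℕ → Ty → Tm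
  | const : ℕ → Ty → Tm
  | lam : ℕ → Ty → Tm → Tm
  | app : Tm → Tm → Tm
  deriving DecidableEq

namespace Tm

/-- The type of a term (if well-typed). -/
def ty? : Tm → Option Ty
  | .var _ A => some A
  | .const _ A => some A
  | .lam _ A t => (ty? t).map (Ty.arr A)
  | .app s t =>
      match ty? s with
      | some (Ty.arr A B) => if ty? t = some A then some B else none
      | _ => none

/-- The free variables (name/type pairs). -/
def free : Tm → Set (ℕ × Ty)
  | .var x A => {(x, A)}
  | .const _ _ => ∅
  | .lam x A t => free t \ {(x, A)}
  | .app s t => free s ∪ free t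

def Closed (t : Tm) : Prop := t.free = ∅

/-- `z` occurs free in `t`. -/
def freeName (t : Tm) (z : ℕ) : Prop := ∃ B, (z, B) ∈ t.free

/-- A binder `λz` occurs in `t`. -/
def bindsVar : Tm → ℕ → Prop
  | .var _ _, _ => False
  | .const _ _, _ => False
  | .lam x _ t, z => x = z ∨ bindsVar t z
  | .app s t, z => bindsVar s z ∨ bindsVar t z

/-- The constants occurring in a term. -/
def consts : Tm → Set ℕ
  | .var _ _ => ∅
  | .const c _ => {c}
  | .lam _ _ t => consts t
  | .app s t => consts s ∪ consts t

/-- The list of bound-variable names. -/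
def binders : Tm → List ℕ
  | .var _ _ => []
  | .const _ _ => []
  | .lam x _ t => x :: binders t
  | .app s t => binders s ++ binders t

/-- A term is well-named if all its binders are pairwise distinct. -/
def WellNamed (t : Tm) : Prop := t.binders.Nodup

/-- Substitution of `u` for the free variable `x : A` (capture-permitting; it is
only applied to well-named terms with disjoint bound variables). -/
def subst (x : ℕ) (A : Ty) (u : Tm) : Tm → Tm
  | .var y B => if y = x ∧ B = A then u else .var y B
  | .const c B => .const c B
  | .lam y B t => if y = x ∧ B = A then .lam y B t else .lam y B (subst x A u t)
  | .app s t => .app (subst x A u s) (subst x A u t)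

/-- One-step β-reduction, closed under congruence. -/
inductive Beta : Tm → Tm → Prop
  | beta (x : ℕ) (A : Ty) (t u : Tm) : Beta (.app (.lam x A t) u) (subst x A u t)
  | appL {s s' : Tm} (t : Tm) : Beta s s' → Beta (.app s t) (.app s' t)
  | appR (s : Tm) {t t' : Tm} : Beta t t' → Beta (.app s t) (.app s t')
  | lam (x : ℕ) (A : Ty) {t t' : Tm} : Beta t t' → Beta (Tm.lam x A t) (Tm.lam x A t')

/-- β-equality. -/
def BetaEq : Tm → Tm → Prop := Relation.EqvGen Beta

/-- Application of a head to a list of arguments. -/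
def appArgs (t : Tm) (args : List Tm) : Tm := args.foldl .app t

inductive IsHead : Tm → Prop
  | var (x : ℕ) (A : Ty) : IsHead (.var x A)
  | const (c : ℕ) (A : Ty) : IsHead (.const c A)

/-- η-long normal forms. -/
inductive ELNF : Tm → Prop
  | head (u : Tm) (args : List Tm) :
      IsHead u → (appArgs u args).ty? = some Ty.base →
      (∀ i : Fin args.length, ELNF args[i]) → ELNF (appArgs u args)
  | lam (x : ℕ) (A : Ty) {t : Tm} : ELNF t → ELNF (Tm.lam x A t)

/-- Strip the leading λ-abstractions. -/
def stripLams : Tm → List (ℕ × Ty) × Tm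
  | .lam x A t => ((x, A) :: (stripLams t).1, (stripLams t).2)
  | t => ([], t)

/-- Decompose a term into its head and arguments. -/
def headArgs : Tm → Tm × List Tm
  | .app s u => ((headArgs s).1, (headArgs s).2 ++ [u])
  | t => (t, [])

/-- `λx₁…xₙ. b` for a list of binders. -/
def lams (xs : List (ℕ × Ty)) (b : Tm) : Tm := xs.foldr (fun p s => Tm.lam p.1 p.2 s) b

/-- Replace the free variables `xs` by their forbidden constants (via `fc`). -/
def fsubst (fc : ℕ → ℕ) (xs : List (ℕ × Ty)) (t : Tm) : Tm :=
  xs.foldl (fun s p => subst p.1 p.2 (Tm.const (fc p.1) p.2) s) t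

/-- Replace each `yⱼ ∈ ys` by the forbidden constant of the corresponding
`xⱼ ∈ xs`. -/
def fsubstPaired (fc : ℕ → ℕ) (ys xs : List (ℕ × Ty)) (t : Tm) : Tm :=
  (ys.zip xs).foldl (fun s p => subst p.1.1 p.1.2 (Tm.const (fc p.2.1) p.2.2) s) t

def isApp : Tm → Bool
  | .app _ _ => true
  | _ => false

/-- The right size `δ(u)` of a right term. -/
def rsize : Tm → ℕ
  | .var _ _ => 0
  | .const _ _ => 0
  | .lam _ _ t => rsize t
  | .app s t => rsize s + rsize t + (if s.isApp then 0 else 1)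

/-- Largest width of any type occurring in the term. -/
def maxWidth : Tm → ℕ
  | .var _ A => A.subWidth
  | .const _ A => A.subWidth
  | .lam _ A t => max A.subWidth (maxWidth t)
  | .app s t => max (maxWidth s) (maxWidth t)

end Tm

/-! ## Dual interpolation problems -/

/-- An interpolation (dis)equation `x v₁ … vₙ ≈ u`. -/
structure DIEqn : Type where
  args : List Tm
  rhs : Tm
  pos : Bool

/-- A dual interpolation problem: a finite nonempty family of interpolation
equations and disequations with the same free variable `x : xty`, together with
the fresh forbidden constants: `fc` assigns to each bound variable of a right
term its forbidden constant. -/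
structure DIProblem : Type where
  xty : Ty
  eqns : List DIEqn
  eqns_ne : eqns ≠ []
  forb : Set ℕ
  fc : ℕ → ℕ
  fc_mem : ∀ x, fc x ∈ forb
  fc_inj : Function.Injective fc
  wf : ∀ e ∈ eqns,
    e.args.length = xty.args.length ∧
    (∀ p ∈ e.args.zip xty.args, p.1.ty? = some p.2 ∧ p.1.Closed ∧ p.1.ELNF) ∧
    e.rhs.ty? = some Ty.base ∧ e.rhs.Closed ∧
    (∀ c ∈ e.rhs.consts, c ∉ forb) ∧ (∀ v ∈ e.args, ∀ c ∈ v.consts, c ∉ forb)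

/-- The order of a problem is the order of its free variable. -/
def DIProblem.order (P : DIProblem) : ℕ := P.xty.order

/-- The right size `δ` of a problem. -/
def DIProblem.delta (P : DIProblem) : ℕ := (P.eqns.map fun e => e.rhs.rsize).sum

/-- The arity `α` of a problem: the largest width of a type among the subtypes
associated with `P`. -/
def DIProblem.arity (P : DIProblem) : ℕ :=
  max P.xty.subWidth ((P.eqns.map fun e => e.rhs.maxWidth).foldr max 0)

/-- A potential solution term for `P`: closed, in η-long normal form, of the
right type, well-named and without forbidden constants. -/
def Candidate (P : DIProblem) (t : Tm) : Prop :=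
  t.Closed ∧ t.ELNF ∧ t.ty? = some P.xty ∧ t.WellNamed ∧ ∀ c ∈ t.consts, c ∉ P.forb

/-- `t ⊨ P`. -/
def Solves (P : DIProblem) (t : Tm) : Prop :=
  Candidate P t ∧ ∀ e ∈ P.eqns,
    (e.pos = true → Tm.BetaEq (Tm.appArgs t e.args) e.rhs) ∧
    (e.pos = false → ¬ Tm.BetaEq (Tm.appArgs t e.args) e.rhs)

/-! ## Term trees (η-long normal forms with dummy lambdas) -/

/-- Labels of term-tree nodes. -/
inductive TLabel : Type
  | lam : List (ℕ × Ty) → TLabel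
  | var : ℕ → Ty → TLabel
  | const : ℕ → Ty → TLabel
  deriving DecidableEq

/-- Term trees. -/
inductive TTree : Type
  | node : TLabel → List TTree → TTree

def TTree.label : TTree → TLabel
  | .node l _ => l

def TTree.children : TTree → List TTree
  | .node _ cs => cs

/-- The subtree at a path (nodes are identified with paths from the root). -/
def TTree.at? : TTree → List ℕ → Option TTree
  | t, [] => some t
  | t, i :: p =>
      match t.children[i]? with
      | some c => TTree.at? c p
      | none => none

/-- The label at a path. -/
def TTree.labelAt? (T : TTree) (p : List ℕ) : Option TLabel := (T.at? p).map TTree.label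

/-- The variables bound by λ-labels along a path. -/
def TTree.bindersAlong : TTree → List ℕ → List ℕ
  | _, [] => []
  | t, i :: p =>
      (match t.label with
       | .lam xs => xs.map Prod.fst
       | _ => []) ++
      (match t.children[i]? with
       | some c => TTree.bindersAlong c p
       | none => [])

/-- `λ…y…` labels some node of the tree. -/
def TTree.BindsVar (t : TTree) (y : ℕ) : Prop :=
  ∃ p xs, t.labelAt? p = some (.lam xs) ∧ y ∈ xs.map Prod.fst

/-- `y` occurs free in the tree. -/
def TTree.FreeVarOcc (t : TTree) (y : ℕ) : Prop :=
  ∃ p A, t.labelAt? p = some (.var y A) ∧ y ∉ t.bindersAlong p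

def TLabel.isHeadLabel : TLabel → Prop
  | .lam _ => False
  | _ => True

/-! ## Tree representation of a term -/

mutual
  /-- `RepLam T t`: the λ-rooted tree `T` represents the term `t`. -/
  inductive RepLam : TTree → Tm → Prop
    | mk (xs : List (ℕ × Ty)) (h : TTree) (b : Tm) :
        RepHead h b → RepLam (TTree.node (.lam xs) [h]) (Tm.lams xs b)
  /-- `RepHead T t`: the head-rooted tree `T` represents the base-type term `t`. -/
  inductive RepHead : TTree → Tm → Prop
    | var (x : ℕ) (A : Ty) (cs : List TTree) (args : List Tm) :
        cs.length = args.length → (∀ p ∈ cs.zip args, RepLam p.1 p.2) →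
        RepHead (TTree.node (.var x A) cs) (Tm.appArgs (Tm.var x A) args)
    | const (c : ℕ) (A : Ty) (cs : List TTree) (args : List Tm) :
        cs.length = args.length → (∀ p ∈ cs.zip args, RepLam p.1 p.2) →
        RepHead (TTree.node (.const c A) cs) (Tm.appArgs (Tm.const c A) args)
end

/-- The tree `T` is the tree representation (with dummy lambdas) of `t`. -/
def Represents (T : TTree) (t : Tm) : Prop := RepLam T t

/-! ## Look-up tables -/

mutual
  /-- A `θ` look-up table: a partial map from variables of the term tree to
  triples `l ξ j`. -/
  inductive Theta : Type
    | mk : (ℕ → ThetaEntry) → Theta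
  inductive ThetaEntry : Type
    | none : ThetaEntry
    | some : Tm → Xi → ℕ → ThetaEntry
  /-- A `ξ` look-up table: a partial map from variables of left terms to
  triples `t' θ j` (with `t'` a node of the term tree). -/
  inductive Xi : Type
    | mk : (ℕ → XiEntry) → Xi
  inductive XiEntry : Type
    | none : XiEntry
    | some : List ℕ → Theta → ℕ → XiEntry
end

def Theta.fn : Theta → ℕ → ThetaEntry
  | .mk f => f

def Xi.fn : Xi → ℕ → XiEntry
  | .mk f => f

def Theta.look (θ : Theta) (y : ℕ) : Option (Tm × Xi × ℕ) :=
  match θ.fn y with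
  | .none => none
  | .some l ξ j => some (l, ξ, j)

def Xi.look (ξ : Xi) (z : ℕ) : Option (List ℕ × Theta × ℕ) :=
  match ξ.fn z with
  | .none => none
  | .some t θ j => some (t, θ, j)

def Theta.empty : Theta := .mk fun _ => .none

def Xi.empty : Xi := .mk fun _ => .none

/-- Update a `θ` table with a list of new entries. -/
def Theta.updates (θ : Theta) (l : List (ℕ × (Tm × Xi × ℕ))) : Theta :=
  .mk fun y =>
    match l.lookup y with
    | some v => .some v.1 v.2.1 v.2.2
    | none => θ.fn y

/-- Update a `ξ` table with a list of new entries. -/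
def Xi.updates (ξ : Xi) (l : List (ℕ × (List ℕ × Theta × ℕ))) : Xi :=
  .mk fun z =>
    match l.lookup z with
    | some v => .some v.1 v.2.1 v.2.2
    | none => ξ.fn z

/-- `μ` extends `μ'`. -/
def Theta.Extends (θ θ' : Theta) : Prop := ∀ y v, θ'.look y = some v → θ.look y = some v

def Xi.Extends (ξ ξ' : Xi) : Prop := ∀ z v, ξ'.look z = some v → ξ.look z = some v

/-! ## States and positions -/

inductive GState : Type
  | arg : List Tm → Tm → GState     -- argument state q[(l₁,…,lₖ), r]
  | val : Tm → Tm → GState          -- value state q[l, r]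
  | emp : Tm → GState               -- empty state q[−, r]
  | finA : GState                   -- final state q[∀]
  | finE : GState                   -- final state q[∃]
  deriving DecidableEq

def GState.IsFinal : GState → Prop
  | .finA => True
  | .finE => True
  | _ => False

/-- The right term of a state. -/
def GState.rhs? : GState → Option Tm
  | .arg _ r => some r
  | .val _ r => some r
  | .emp r => some r
  | _ => none

/-- `λ…z…` occurs in a left term of the state. -/
def GState.BindsVar : GState → ℕ → Prop
  | .val l _, z => l.bindsVar z
  | .arg ls _, z => ∃ l ∈ ls, l.bindsVar z
  | _, _ => False

/-- `z` occurs free in a left term of the state. -/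
def GState.FreeVar : GState → ℕ → Prop
  | .val l _, z => l.freeName z
  | .arg ls _, z => ∃ l ∈ ls, l.freeName z
  | _, _ => False

/-- A position of the tree-checking game: a node of the term tree, a state and
the two look-up tables. -/
structure GPos : Type where
  node : List ℕ
  st : GState
  th : Theta
  xi : Xi

inductive MoveKind : Type
  | A1 | A2 | A3 | B1 | C1 | C2 | C3 | C4
  deriving DecidableEq

/-! ## The game moves (Figure 2) -/

/-- Updates of `θ` at an A-move: the binders `xs` get the left terms `ls`
paired with `ξ` and the current position index `m`. -/
def aUpd (xs : List (ℕ × Ty)) (ls : List Tm) (ξ : Xi) (m : ℕ) :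
    List (ℕ × (Tm × Xi × ℕ)) :=
  (xs.zip ls).map fun p => (p.1.1, (p.2, ξ, m))

/-- Updates of `ξ` at a C-move: the binders `zs` of the left term get the
successor nodes of `n` paired with `θ` and the current position index `m`. -/
def cUpd (n : List ℕ) (zs : List (ℕ × Ty)) (θ : Theta) (m : ℕ) :
    List (ℕ × (List ℕ × Theta × ℕ)) :=
  zs.zipIdx.map fun p => (p.1.1, (n ++ [p.2], θ, m))

/-- The argument state produced when `∀` chooses the right subterm `s`
(moves B1 and C2): `q[(c_{i₁},…,c_{iₙ}), s{c̄/x̄}]`. -/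
def argStateOf (fc : ℕ → ℕ) (s : Tm) : GState :=
  GState.arg ((s.stripLams.1).map fun p => Tm.const (fc p.1) p.2)
    (Tm.fsubst fc s.stripLams.1 s.stripLams.2)

/-- The value state produced at move C3 for the chosen `w` and `s`:
`q[w'{c̄/ȳ}, s{c̄/x̄}]`. -/
def valStateOf (fc : ℕ → ℕ) (w s : Tm) : GState :=
  GState.val (Tm.fsubstPaired fc w.stripLams.1 s.stripLams.1 w.stripLams.2)
    (Tm.fsubst fc s.stripLams.1 s.stripLams.2)

/-- The moves of the tree-checking game (Figure 2 of the paper); `m` is the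
index of the source position. -/
inductive GMove (T : TTree) (fc : ℕ → ℕ) (m : ℕ) : GPos → MoveKind → GPos → Prop
  | A1 (n : List ℕ) (xs : List (ℕ × Ty)) (ls : List Tm) (r : Tm)
      (θ : Theta) (ξ : Xi) (a : ℕ) :
      T.labelAt? n = some (.lam xs) → ls.length = xs.length →
      T.labelAt? (n ++ [0]) = some (.const a Ty.base) →
      GMove T fc m ⟨n, .arg ls r, θ, ξ⟩ .A1
        ⟨n ++ [0], if r = Tm.const a Ty.base then .finE else .finA,
          θ.updates (aUpd xs ls ξ m), ξ⟩
  | A2 (n : List ℕ) (xs : List (ℕ × Ty)) (ls : List Tm) (r : Tm)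
      (θ : Theta) (ξ : Xi) (f : ℕ) (A : Ty) (ss : List Tm) :
      T.labelAt? n = some (.lam xs) → ls.length = xs.length →
      T.labelAt? (n ++ [0]) = some (.const f A) → A ≠ Ty.base →
      r.headArgs = (Tm.const f A, ss) →
      GMove T fc m ⟨n, .arg ls r, θ, ξ⟩ .A2
        ⟨n ++ [0], .emp r, θ.updates (aUpd xs ls ξ m), ξ⟩
  | A2f (n : List ℕ) (xs : List (ℕ × Ty)) (ls : List Tm) (r : Tm)
      (θ : Theta) (ξ : Xi) (f : ℕ) (A : Ty) :
      T.labelAt? n = some (.lam xs) → ls.length = xs.length →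
      T.labelAt? (n ++ [0]) = some (.const f A) → A ≠ Ty.base →
      r.headArgs.1 ≠ Tm.const f A →
      GMove T fc m ⟨n, .arg ls r, θ, ξ⟩ .A2
        ⟨n ++ [0], .finA, θ.updates (aUpd xs ls ξ m), ξ⟩
  | A3 (n : List ℕ) (xs : List (ℕ × Ty)) (ls : List Tm) (r : Tm)
      (θ : Theta) (ξ ξ₀ : Xi) (y : ℕ) (B : Ty) (l : Tm) (i : ℕ) :
      T.labelAt? n = some (.lam xs) → ls.length = xs.length →
      T.labelAt? (n ++ [0]) = some (.var y B) →
      (θ.updates (aUpd xs ls ξ m)).look y = some (l, ξ₀, i) →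
      GMove T fc m ⟨n, .arg ls r, θ, ξ⟩ .A3
        ⟨n ++ [0], .val l r, θ.updates (aUpd xs ls ξ m), ξ₀⟩
  | B1 (n : List ℕ) (f : ℕ) (A : Ty) (r : Tm) (ss : List Tm)
      (θ : Theta) (ξ : Xi) (d : ℕ) (sd : Tm) :
      T.labelAt? n = some (.const f A) →
      r.headArgs = (Tm.const f A, ss) → ss[d]? = some sd →
      GMove T fc m ⟨n, .emp r, θ, ξ⟩ .B1 ⟨n ++ [d], argStateOf fc sd, θ, ξ⟩
  | C1 (n : List ℕ) (y : ℕ) (B : Ty) (l r : Tm) (θ : Theta) (ξ : Xi) (a : ℕ) :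
      T.labelAt? n = some (.var y B) →
      l.stripLams.2 = Tm.const a Ty.base →
      GMove T fc m ⟨n, .val l r, θ, ξ⟩ .C1
        ⟨n, if r = Tm.const a Ty.base then .finE else .finA, θ,
          ξ.updates (cUpd n l.stripLams.1 θ m)⟩
  | C2 (n : List ℕ) (y : ℕ) (B : Ty) (r : Tm) (θ : Theta) (ξ : Xi)
      (c : ℕ) (A : Ty) (ss : List Tm) (d : ℕ) (sd : Tm) :
      T.labelAt? n = some (.var y B) → A ≠ Ty.base →
      r.headArgs = (Tm.const c A, ss) → ss[d]? = some sd →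
      GMove T fc m ⟨n, .val (Tm.const c A) r, θ, ξ⟩ .C2
        ⟨n ++ [d], argStateOf fc sd, θ, ξ⟩
  | C2f (n : List ℕ) (y : ℕ) (B : Ty) (r : Tm) (θ : Theta) (ξ : Xi)
      (c : ℕ) (A : Ty) :
      T.labelAt? n = some (.var y B) → A ≠ Ty.base →
      r.headArgs.1 ≠ Tm.const c A →
      GMove T fc m ⟨n, .val (Tm.const c A) r, θ, ξ⟩ .C2 ⟨n, .finA, θ, ξ⟩
  | C3 (n : List ℕ) (y : ℕ) (B : Ty) (l r : Tm) (θ : Theta) (ξ : Xi)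
      (f : ℕ) (A : Ty) (ws ss : List Tm) (d : ℕ) (wd sd : Tm) :
      T.labelAt? n = some (.var y B) →
      (l.stripLams.2).headArgs = (Tm.const f A, ws) → ws ≠ [] →
      r.headArgs = (Tm.const f A, ss) → ws[d]? = some wd → ss[d]? = some sd →
      GMove T fc m ⟨n, .val l r, θ, ξ⟩ .C3
        ⟨n, valStateOf fc wd sd, θ, ξ.updates (cUpd n l.stripLams.1 θ m)⟩
  | C3f (n : List ℕ) (y : ℕ) (B : Ty) (l r : Tm) (θ : Theta) (ξ : Xi)
      (f : ℕ) (A : Ty) (ws : List Tm) :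
      T.labelAt? n = some (.var y B) →
      (l.stripLams.2).headArgs = (Tm.const f A, ws) → ws ≠ [] →
      r.headArgs.1 ≠ Tm.const f A →
      GMove T fc m ⟨n, .val l r, θ, ξ⟩ .C3
        ⟨n, .finA, θ, ξ.updates (cUpd n l.stripLams.1 θ m)⟩
  | C4 (n : List ℕ) (y : ℕ) (B : Ty) (l r : Tm) (θ θ₀ : Theta) (ξ : Xi)
      (x : ℕ) (C : Ty) (ws : List Tm) (n' : List ℕ) (i : ℕ) :
      T.labelAt? n = some (.var y B) →
      (l.stripLams.2).headArgs = (Tm.var x C, ws) →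
      (ξ.updates (cUpd n l.stripLams.1 θ m)).look x = some (n', θ₀, i) →
      GMove T fc m ⟨n, .val l r, θ, ξ⟩ .C4
        ⟨n', .arg ws r, θ₀, ξ.updates (cUpd n l.stripLams.1 θ m)⟩

/-! ## Plays of the tree-checking game -/

/-- A play of the game `G(t,P)`: a finite sequence of positions
`π(1),…,π(len)` starting at the root of the term tree with an initial state
chosen from a (dis)equation of `P`, proceeding by the game moves and ending at
the first final state.  `mv j` records which move produced position `j`. -/
structure Play (T : TTree) (P : DIProblem) : Type where
  len : ℕ
  pos : ℕ → GPos
  mv : ℕ → MoveKind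
  one_le : 1 ≤ len
  init_node : (pos 1).node = []
  init_th : (pos 1).th = Theta.empty
  init_xi : (pos 1).xi = Xi.empty
  init_st : ∃ e ∈ P.eqns, (pos 1).st = GState.arg e.args e.rhs
  steps : ∀ m, 1 ≤ m → m < len → GMove T P.fc m (pos m) (mv (m + 1)) (pos (m + 1))
  final_iff : ∀ m, 1 ≤ m → m ≤ len → ((pos m).st.IsFinal ↔ m = len)

namespace Play

variable {T : TTree} {P : DIProblem}

/-- The sequence of positions of a play. -/
def trace (π : Play T P) : List GPos := (List.range π.len).map fun i => π.pos (i + 1)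

/-- The refuter `∀` wins the play. -/
def AWins (π : Play T P) : Prop := (π.pos π.len).st = GState.finA

/-- The initial state of the play is the one given by the (dis)equation `e`. -/
def startsFrom (π : Play T P) (e : DIEqn) : Prop :=
  (π.pos 1).st = GState.arg e.args e.rhs

/-- `π.child j i`: position `π(j)` is a child of position `π(i)`
(Definition 4.10). -/
def child (π : Play T P) (j i : ℕ) : Prop :=
  i < j ∧ j < π.len ∧
  (((π.mv j = .A2 ∨ π.mv j = .B1 ∨ π.mv j = .C2 ∨ π.mv j = .C3) ∧ i = j - 1) ∨
   (π.mv j = .A3 ∧ ∃ y B l ξ', T.labelAt? (π.pos j).node = some (.var y B) ∧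
      (π.pos j).th.look y = some (l, ξ', i)) ∨
   (π.mv j = .C4 ∧ ∃ l r x C, (π.pos (j - 1)).st = GState.val l r ∧
      (l.stripLams.2).headArgs.1 = Tm.var x C ∧
      (π.pos j).xi.look x = some ((π.pos j).node, (π.pos j).th, i)))

/-- `π(j)` is a descendent of `π(i)`: the reflexive-transitive closure of the
child relation. -/
def desc (π : Play T P) : ℕ → ℕ → Prop := Relation.ReflTransGen π.child

/-- The interval `π(i,j)` is right-term invariant. -/
def ri (π : Play T P) (i j : ℕ) : Prop :=
  ∃ r, (π.pos i).st.rhs? = some r ∧ (π.pos j).st.rhs? = some r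

/-- The interval `π(i,j)` is nri: not ri, and `π(j)` is not final. -/
def nri (π : Play T P) (i j : ℕ) : Prop := ¬ π.ri i j ∧ ¬ (π.pos j).st.IsFinal

end Play

/-- Definition 4.5: the refuter `∀` loses the game `G(t,P)`. -/
def RefuterLoses (T : TTree) (P : DIProblem) : Prop :=
  (∀ e ∈ P.eqns, e.pos = true → ∀ π : Play T P, π.startsFrom e → ¬ π.AWins) ∧
  (∀ e ∈ P.eqns, e.pos = false → ∃ π : Play T P, π.startsFrom e ∧ π.AWins)

/-- The number of (distinct) plays of the game `G(t,P)`. -/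
noncomputable def numPlays (T : TTree) (P : DIProblem) : ℕ :=
  Nat.card { tr : List GPos // ∃ π : Play T P, π.trace = tr }

/-! ## Tiles -/

/-- The shape of a (composite) tile: for each atomic leaf of the root simple
tile, optionally a tile placed directly beneath it.  An occurrence of a tile in
a term tree is a pair of a path (the root head node) and a shape. -/
inductive Tile : Type
  | mk : List (Option Tile) → Tile

def Tile.subs : Tile → List (Option Tile)
  | .mk s => s

/-- The trivial simple-tile shape of a head node of a tree. -/
def TTree.simpleTile (t : TTree) : Tile := Tile.mk (List.replicate t.children.length none)

/-- The tile occurrence `(p, τ)` is a valid region of the term tree `T`. -/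
inductive TileValid (T : TTree) : List ℕ → Tile → Prop
  | mk (p : List ℕ) (subs : List (Option Tile)) (t' : TTree) :
      T.at? p = some t' → t'.label.isHeadLabel → subs.length = t'.children.length →
      (∀ i τ', subs[i]? = some (some τ') → TileValid T (p ++ [i, 0]) τ') →
      TileValid T p (.mk subs)

/-- The head nodes of a tile occurrence. -/
inductive TileHead (T : TTree) : List ℕ → Tile → List ℕ → Prop
  | root (p : List ℕ) (subs : List (Option Tile)) : TileHead T p (.mk subs) p
  | sub (p : List ℕ) (subs : List (Option Tile)) (i : ℕ) (τ' : Tile) (q : List ℕ) :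
      subs[i]? = some (some τ') → TileHead T (p ++ [i, 0]) τ' q →
      TileHead T p (.mk subs) q

/-- The λ-nodes of a tile occurrence. -/
inductive TileLam (T : TTree) : List ℕ → Tile → List ℕ → Prop
  | lam (p : List ℕ) (subs : List (Option Tile)) (i : ℕ) :
      i < subs.length → TileLam T p (.mk subs) (p ++ [i])
  | sub (p : List ℕ) (subs : List (Option Tile)) (i : ℕ) (τ' : Tile) (q : List ℕ) :
      subs[i]? = some (some τ') → TileLam T (p ++ [i, 0]) τ' q →
      TileLam T p (.mk subs) q

/-- The atomic leaves of a tile occurrence. -/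
inductive TileLeaf (T : TTree) : List ℕ → Tile → List ℕ → Prop
  | leaf (p : List ℕ) (subs : List (Option Tile)) (i : ℕ) :
      subs[i]? = some none → TileLeaf T p (.mk subs) (p ++ [i])
  | sub (p : List ℕ) (subs : List (Option Tile)) (i : ℕ) (τ' : Tile) (q : List ℕ) :
      subs[i]? = some (some τ') → TileLeaf T (p ++ [i, 0]) τ' q →
      TileLeaf T p (.mk subs) q

/-- All nodes of a tile occurrence. -/
def TileNodeAll (T : TTree) (p : List ℕ) (τ : Tile) (q : List ℕ) : Prop :=
  TileHead T p τ q ∨ TileLam T p τ q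

/-- `y` is bound by some λ-node of the tile. -/
def TileBindsName (T : TTree) (p : List ℕ) (τ : Tile) (y : ℕ) : Prop :=
  ∃ q xs, TileLam T p τ q ∧ T.labelAt? q = some (.lam xs) ∧ y ∈ xs.map Prod.fst

/-- There is an occurrence, at node `q` of the tile, of the variable `y` free
in the tile. -/
def TileFreeVarAt (T : TTree) (p : List ℕ) (τ : Tile) (q : List ℕ) (y : ℕ) : Prop :=
  TileHead T p τ q ∧ (∃ A, T.labelAt? q = some (.var y A)) ∧
  ∀ t', T.at? p = some t' → y ∉ t'.bindersAlong (q.drop p.length)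

/-- There is an occurrence, at node `q` of the tile, of the constant `c`. -/
def TileConstAt (T : TTree) (p : List ℕ) (τ : Tile) (q : List ℕ) (c : ℕ) : Prop :=
  TileHead T p τ q ∧ ∃ A, T.labelAt? q = some (.const c A)

/-- A basic tile: exactly one occurrence of a free variable and no constants,
or exactly one occurrence of a constant and no free variables. -/
def BasicTile (T : TTree) (p : List ℕ) (τ : Tile) : Prop :=
  TileValid T p τ ∧
    (((∃! q : List ℕ, ∃ y : ℕ, TileFreeVarAt T p τ q y) ∧
        ¬ ∃ q c, TileConstAt T p τ q c) ∨
     ((∃! q : List ℕ, ∃ c : ℕ, TileConstAt T p τ q c) ∧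
        ¬ ∃ q y, TileFreeVarAt T p τ q y))

/-- A top tile: a basic tile with a free variable occurrence bound by the
initial λ of the term tree. -/
def TopTile (T : TTree) (p : List ℕ) (τ : Tile) : Prop :=
  BasicTile T p τ ∧ ∃ q y xs, TileFreeVarAt T p τ q y ∧
    T.label = TLabel.lam xs ∧ y ∈ xs.map Prod.fst

/-- `γ` (rooted at `pγ`) is below the atomic leaf `q` of `τ`: there is a path
of successors from `q` to `pγ`. -/
def TileBelowAt (T : TTree) (p : List ℕ) (τ : Tile) (q pγ : List ℕ) : Prop :=
  TileLeaf T p τ q ∧ q <+: pγ ∧ q ≠ pγ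

/-- `γ` is an immediate dependent of `τ` below the atomic leaf `q` of `τ`:
it is below `q` and contains a free variable bound in `τ`. -/
def ImmDependentAt (T : TTree) (p : List ℕ) (τ : Tile) (q pγ : List ℕ) (γ : Tile) :
    Prop :=
  BasicTile T pγ γ ∧ TileBelowAt T p τ q pγ ∧
  ∃ q' y, TileFreeVarAt T pγ γ q' y ∧ TileBindsName T p τ y

/-- `γ` is a dependent of `τ` below the atomic leaf `q` of `τ`. -/
inductive DependentAt (T : TTree) : List ℕ → Tile → List ℕ → List ℕ → Tile → Prop
  | imm (p : List ℕ) (τ : Tile) (q pγ : List ℕ) (γ : Tile) :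
      ImmDependentAt T p τ q pγ γ → DependentAt T p τ q pγ γ
  | trans (p : List ℕ) (τ : Tile) (q p' : List ℕ) (τ' : Tile) (q' pγ : List ℕ)
      (γ : Tile) :
      ImmDependentAt T p τ q p' τ' → DependentAt T p' τ' q' pγ γ →
      DependentAt T p τ q pγ γ

/-- `γ` is a dependent of `τ`. -/
def Dependent (T : TTree) (p : List ℕ) (τ : Tile) (pγ : List ℕ) (γ : Tile) : Prop :=
  ∃ q, DependentAt T p τ q pγ γ

/-- Two tiles belong to the same family. -/
def SameFamily (T : TTree) (p₁ : List ℕ) (τ₁ : Tile) (p₂ : List ℕ) (τ₂ : Tile) : Prop :=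
  Dependent T p₁ τ₁ p₂ τ₂ ∨ Dependent T p₂ τ₂ p₁ τ₁ ∨
  ∃ p' τ', Dependent T p' τ' p₁ τ₁ ∧ Dependent T p' τ' p₂ τ₂

/-- `τ₂` is in the family of tiles associated with `τ₁`. -/
def InFamily (T : TTree) (p₁ : List ℕ) (τ₁ : Tile) (p₂ : List ℕ) (τ₂ : Tile) : Prop :=
  (p₁ = p₂ ∧ τ₁ = τ₂) ∨ SameFamily T p₁ τ₁ p₂ τ₂

/-- `τ` is end at its atomic leaf `q` (j-end): it has no immediate dependents
below `q`. -/
def EndAt (T : TTree) (p : List ℕ) (τ : Tile) (q : List ℕ) : Prop :=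
  TileLeaf T p τ q ∧ ¬ ∃ pγ γ, ImmDependentAt T p τ q pγ γ

/-- An end tile: end at every atomic leaf. -/
def EndTile (T : TTree) (p : List ℕ) (τ : Tile) : Prop :=
  ∀ q, TileLeaf T p τ q → EndAt T p τ q

/-- A constant tile: it contains an occurrence of a constant, or is a
dependent of a constant tile. -/
inductive ConstTile (T : TTree) : List ℕ → Tile → Prop
  | base (p : List ℕ) (τ : Tile) :
      (∃ q c, TileConstAt T p τ q c) → ConstTile T p τ
  | dep (p : List ℕ) (τ : Tile) (p' : List ℕ) (τ' : Tile) :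
      ConstTile T p' τ' → Dependent T p' τ' p τ → ConstTile T p τ

/-- Renaming of labels: bound variables are renamed by `ρ`, the free variable
and the constants are kept. -/
def LabelRen (ρ : ℕ → ℕ) (bound : ℕ → Prop) : TLabel → TLabel → Prop
  | .lam xs, .lam ys => ys = xs.map fun p => (ρ p.1, p.2)
  | .var x A, .var x' A' => A = A' ∧ ((bound x ∧ x' = ρ x) ∨ (¬ bound x ∧ x' = x))
  | .const c A, .const c' A' => c = c' ∧ A = A'
  | _, _ => False

/-- Tile equivalence `τ ≡ γ` (α-equivalence of basic tiles with the same single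
free variable occurrence); corresponding nodes are at the same relative
paths. -/
def TileEquiv (T : TTree) (p : List ℕ) (τ : Tile) (p' : List ℕ) (γ : Tile) : Prop :=
  BasicTile T p τ ∧ BasicTile T p' γ ∧ τ = γ ∧
  ∃ ρ : ℕ → ℕ,
    ∀ q l l', TileNodeAll T p τ q → T.labelAt? q = some l →
      T.labelAt? (p' ++ q.drop p.length) = some l' →
      LabelRen ρ (TileBindsName T p τ) l l'

/-! ## Plays on tiles -/

namespace Play

variable {T : TTree} {P : DIProblem}

/-- `π(i,j)` is a play on the tile occurrence `(p, τ)` ending at its atomic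
leaf `q`, decomposed as the list `cuts` of consecutive plays `(iₗ, jₗ)` on the
simple tiles along the branch of `τ` from its root to `q`. -/
inductive TilePlayCuts (π : Play T P) :
    List ℕ → Tile → List (ℕ × ℕ) → List ℕ → Prop
  | simple (p : List ℕ) (subs : List (Option Tile)) (d i j : ℕ) :
      subs[d]? = some none → (π.pos i).node = p → (π.pos j).node = p ++ [d] →
      π.child j i → TilePlayCuts π p (.mk subs) [(i, j)] (p ++ [d])
  | step (p : List ℕ) (subs : List (Option Tile)) (d i j j₂ : ℕ)
      (cuts : List (ℕ × ℕ)) (q : List ℕ) (τ' : Tile) :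
      subs[d]? = some (some τ') → (π.pos i).node = p →
      (π.pos j).node = p ++ [d] → π.child j i →
      TilePlayCuts π (p ++ [d, 0]) τ' ((j + 1, j₂) :: cuts) q →
      TilePlayCuts π p (.mk subs) ((i, j) :: (j + 1, j₂) :: cuts) q

/-- `π(i,j)` is a play on the tile occurrence `(p, τ)` ending at its atomic
leaf `q`. -/
def TilePlayOn (π : Play T P) (p : List ℕ) (τ : Tile) (i j : ℕ) (q : List ℕ) :
    Prop :=
  ∃ cuts x y, π.TilePlayCuts p τ cuts q ∧ cuts.head? = some x ∧ x.1 = i ∧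
    cuts.getLast? = some y ∧ y.2 = j

/-- A shortest play on `(p, τ)` ending at the leaf `q` (no proper prefix is a
play on `τ` ending at `q`). -/
def ShortestLeafPlay (π : Play T P) (p : List ℕ) (τ : Tile) (i j : ℕ)
    (q : List ℕ) : Prop :=
  π.TilePlayOn p τ i j q ∧ ∀ k, k < j → ¬ π.TilePlayOn p τ i k q

/-- A shortest play on `(p, τ)` (no proper prefix is a play on `τ`). -/
def ShortestPlay (π : Play T P) (p : List ℕ) (τ : Tile) (i j : ℕ) : Prop :=
  (∃ q, π.TilePlayOn p τ i j q) ∧ ∀ k, k < j → ¬ ∃ q, π.TilePlayOn p τ i k q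

/-- The interval `π(i,j)` is internal to the tile `(p, τ)`. -/
def InternalOn (π : Play T P) (p : List ℕ) (τ : Tile) (i j : ℕ) : Prop :=
  ∀ n, i ≤ n → n ≤ j → TileNodeAll T p τ (π.pos n).node

end Play

/-- `τ` is directed towards its atomic leaf `q` (j-directed) with respect to
the interval `π(i,|π|)` (Definition 5.18). -/
inductive DirectedFrom {T : TTree} {P : DIProblem} (π : Play T P)
    (p : List ℕ) (τ : Tile) (q : List ℕ) : ℕ → Prop
  | none (i : ℕ) :
      (∀ m, i ≤ m → m ≤ π.len → (π.pos m).node ≠ p) → DirectedFrom π p τ q i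
  | step (i m n : ℕ) :
      i ≤ m → (π.pos m).node = p →
      (∀ m', i ≤ m' → m' < m → (π.pos m').node ≠ p) →
      π.ShortestLeafPlay p τ m n q → π.ri m n →
      DirectedFrom π p τ q (n + 1) → DirectedFrom π p τ q i

/-- `τ` is directed towards its atomic leaf `q` (j-directed) with respect to
the game `G(t,P)`. -/
def DirectedWrtGame (T : TTree) (P : DIProblem) (p : List ℕ) (τ : Tile)
    (q : List ℕ) : Prop :=
  ∀ π : Play T P, DirectedFrom π p τ q 1

/-! ## b-partitions, variation and correspondence -/

namespace Play

variable {T : TTree} {P : DIProblem}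

/-- The b-partition for the position `π(j)` at a λ-node (Definition 6.14):
`js = [j₀, j₁, …, jₙ]` with `j₀ = 1`, `jₙ = j` and, for each `m`, the interval
`π(jₘ₋₁ + 1, jₘ)` is a play on the `m`-th simple tile along the branch from the
root of the term tree to the node of `π(j)`, ending at the `m`-th λ-node of
that branch. -/
def IsBPartition (π : Play T P) (j : ℕ) (js : List ℕ) : Prop :=
  js.length = (π.pos j).node.length / 2 + 1 ∧ js[0]? = some 1 ∧
  js[(π.pos j).node.length / 2]? = some j ∧
  ∀ m, 1 ≤ m → m ≤ (π.pos j).node.length / 2 →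
    ∀ a b, js[m - 1]? = some a → js[m]? = some b →
      (π.pos (a + 1)).node = (π.pos j).node.take (2 * m - 1) ∧
      (π.pos b).node = (π.pos j).node.take (2 * m) ∧ π.child b (a + 1)

/-- Positions `π(j)`, `π(j')` vary at `π(jk)`, `π(j'k)` with the simple tile
rooted at the path `pτ` (Definition 8.4): they are at the same λ-node and `pτ`
is the head of the first simple tile in their b-partitions at which the two
plays differ. -/
def VaryAt (π : Play T P) (j j' jk j'k : ℕ) (pτ : List ℕ) : Prop :=
  (π.pos j).node = (π.pos j').node ∧ j ≠ j' ∧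
  ∃ js js' k, π.IsBPartition j js ∧ π.IsBPartition j' js' ∧ 1 ≤ k ∧
    (∀ m, m < k → js[m]? = js'[m]?) ∧
    js[k]? = some jk ∧ js'[k]? = some j'k ∧ jk ≠ j'k ∧
    pτ = (π.pos j).node.take (2 * k - 1)

/-- The intervals `π(i,j)` and `π(i',j')` correspond (Definition 8.3): they
have the same length, visit the same nodes and have states of the same kind
with the same left terms (the right terms may differ). -/
def corr (π : Play T P) (i j i' j' : ℕ) : Prop :=
  j < π.len ∧ j' < π.len ∧ i ≤ j ∧ i' ≤ j' ∧ j - i = j' - i' ∧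
  ∀ k, k ≤ j - i →
    (π.pos (i + k)).node = (π.pos (i' + k)).node ∧
    (∀ l r, (π.pos (i + k)).st = GState.val l r →
      ∃ r', (π.pos (i' + k)).st = GState.val l r') ∧
    (∀ ls r, (π.pos (i + k)).st = GState.arg ls r →
      ∃ r', (π.pos (i' + k)).st = GState.arg ls r') ∧
    (∀ r, (π.pos (i + k)).st = GState.emp r →
      ∃ r', (π.pos (i' + k)).st = GState.emp r')

end Play

/-- No simple tile headed by an occurrence of the variable `y` is a dependent
of the tile `(pτ, τ)`. -/
def NotDependentHead (T : TTree) (pτ : List ℕ) (τ : Tile) (y : ℕ) : Prop :=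
  ∀ q A t', T.labelAt? q = some (TLabel.var y A) → T.at? q = some t' →
    ¬ Dependent T pτ τ q t'.simpleTile

mutual
  /-- Look-up tables `n`-similar except for the tile `(pτ, τ)`
  (Definition 8.6). -/
  def ThetaSim (T : TTree) (pτ : List ℕ) (τ : Tile) : ℕ → Theta → Theta → Prop
    | 0, θ, θ' => θ = θ'
    | n + 1, θ, θ' =>
        (∀ y, (θ.look y).isSome = (θ'.look y).isSome) ∧
        (∀ y l ξ i, NotDependentHead T pτ τ y → θ.look y = some (l, ξ, i) →
          ∃ ξ' i', θ'.look y = some (l, ξ', i') ∧ XiSim T pτ τ n ξ ξ')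
  def XiSim (T : TTree) (pτ : List ℕ) (τ : Tile) : ℕ → Xi → Xi → Prop
    | 0, ξ, ξ' => ξ = ξ'
    | n + 1, ξ, ξ' =>
        (∀ z, (ξ.look z).isSome = (ξ'.look z).isSome) ∧
        (∀ z t θ i, ξ.look z = some (t, θ, i) →
          ∃ θ' i', ξ'.look z = some (t, θ', i') ∧ ThetaSim T pτ τ n θ θ')
end

/-- Look-up tables similar except for the tile `(pτ, τ)`: `θ ∼τ θ'`. -/
def ThetaSimA (T : TTree) (pτ : List ℕ) (τ : Tile) (θ θ' : Theta) : Prop :=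
  ∃ n, ThetaSim T pτ τ n θ θ'

/-! ## The transformations T1 and T2 -/

/-- Replace the subtree at a path. -/
def TTree.replaceAt : TTree → List ℕ → TTree → TTree
  | _, [], u => u
  | .node l cs, i :: p, u =>
      .node l (cs.mapIdx fun j c => if j = i then TTree.replaceAt c p u else c)

/-- The game `G(t,P)` avoids the subtree at path `p`. -/
def AvoidedBy (T : TTree) (P : DIProblem) (p : List ℕ) : Prop :=
  ∀ π : Play T P, ∀ i, 1 ≤ i → i ≤ π.len → (π.pos i).node ≠ p

/-- Transformation T1: if every play avoids the subtree rooted at `p` (whose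
root is labelled with a variable or a higher-order constant), replace it by a
single node labelled with a fresh base-type constant `d`. -/
def T1Rel (P : DIProblem) (T T' : TTree) : Prop :=
  ∃ (p : List ℕ) (t' : TTree) (d : ℕ),
    T.at? p = some t' ∧
    ((∃ y B, t'.label = TLabel.var y B) ∨
      (∃ f B, t'.label = TLabel.const f B ∧ B ≠ Ty.base)) ∧
    AvoidedBy T P p ∧
    d ∉ P.forb ∧ (∀ e ∈ P.eqns, d ∉ e.rhs.consts) ∧
    T' = T.replaceAt p (TTree.node (TLabel.const d Ty.base) [])

/-- Transformation T2: if the basic tile `(p, τ)` is end at its atomic leaf `q`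
and directed towards `q` with respect to the game, replace the subtree rooted
at `τ` by the subtree directly beneath `q`. -/
def T2Rel (P : DIProblem) (T T' : TTree) : Prop :=
  ∃ (p q : List ℕ) (τ : Tile) (sub : TTree),
    BasicTile T p τ ∧ EndAt T p τ q ∧ DirectedWrtGame T P p τ q ∧
    T.at? (q ++ [0]) = some sub ∧
    T' = T.replaceAt p sub

/-- `T` (as a tree) solves `P`: it represents a term `t` with `t ⊨ P`. -/
def TSolves (P : DIProblem) (T : TTree) : Prop := ∃ t, Represents T t ∧ Solves P t

/-! ## Size measures -/

/-- A head node with at least one successor: a simple tile with atomic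
leaves. -/
def TTree.headWithChildren : TTree → Bool
  | .node (.lam _) _ => false
  | .node _ [] => false
  | .node _ (_ :: _) => true

/-- The number of simple tiles with atomic leaves along a path. -/
def TTree.tilesOnPath : TTree → List ℕ → ℕ
  | t, [] => if t.headWithChildren then 1 else 0
  | t, i :: p =>
      (if t.headWithChildren then 1 else 0) +
      match t.children[i]? with
      | some c => TTree.tilesOnPath c p
      | none => 0

/-- `|t|`: the number of simple tiles with atomic leaves in a longest branch. -/
noncomputable def TTree.branchTilesMax (T : TTree) : ℕ :=
  sSup { n : ℕ | ∃ p : List ℕ, (T.at? p).isSome = true ∧ TTree.tilesOnPath T p = n }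

/-- `‖t‖`: the total number of simple tiles with atomic leaves. -/
noncomputable def TTree.totalTiles (T : TTree) : ℕ :=
  Nat.card { p : List ℕ // ∃ t', T.at? p = some t' ∧ t'.headWithChildren = true }

/-- A top simple tile: a simple tile whose head variable is bound by the
initial λ of the term tree. -/
def IsTopSimpleTile (T : TTree) (p : List ℕ) : Prop :=
  ∃ t' y A xs, T.at? p = some t' ∧ t'.label = TLabel.var y A ∧
    t'.children ≠ [] ∧ T.label = TLabel.lam xs ∧ y ∈ xs.map Prod.fst

/-- The tower function of Theorem 9.3: `g 1 = 1` and `g (k+1) = (α+1)^(g k)`. -/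
def gfun (α : ℕ) : ℕ → ℕ
  | 0 => 1
  | 1 => 1
  | k + 2 => (α + 1) ^ gfun α (k + 1)

theorem Nat.exists_first_ne_of_eq_zero {α : Type*} {f g : ℕ → α} {n : ℕ}
    (h0 : f 0 = g 0) (hn : f n ≠ g n) :
    ∃ k, 1 ≤ k ∧ k ≤ n ∧ f k ≠ g k ∧ ∀ m < k, f m = g m := by
  classical
  have hex : ∃ k, f k ≠ g k := ⟨n, hn⟩
  have hpos : Nat.find hex ≠ 0 := fun h => Nat.find_spec hex (h ▸ h0)
  exact ⟨Nat.find hex, Nat.one_le_iff_ne_zero.mpr hpos, Nat.find_min' hex hn,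
    Nat.find_spec hex, fun m hm => not_not.mp (Nat.find_min hex hm)⟩

/-- A b-partition starts at `1` and ends at its own position, so two b-partitions for
distinct positions at the same node agree at index `0` and differ at the last index. -/
theorem b_partitions_first_difference {T : TTree} {P : DIProblem}
    (π : Play T P) (j j' : ℕ)
    (hne : j ≠ j') (hnode : (π.pos j).node = (π.pos j').node)
    (xs : List (ℕ × Ty)) (hlam : T.labelAt? (π.pos j).node = some (.lam xs))
    (js js' : List ℕ)
    (h1 : π.IsBPartition j js) (h2 : π.IsBPartition j' js') :
    ∃ k, 1 ≤ k ∧ k ≤ (π.pos j).node.length / 2 ∧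
      js[k]? ≠ js'[k]? ∧ ∀ m, m < k → js[m]? = js'[m]? := by
  obtain ⟨-, hstart, hend, -⟩ := h1
  obtain ⟨-, hstart', hend', -⟩ := h2
  rw [← hnode] at hend'
  have hlast : js[(π.pos j).node.length / 2]? ≠ js'[(π.pos j).node.length / 2]? := by
    rw [hend, hend']
    exact fun h => hne (Option.some_injective _ h)
  exact Nat.exists_first_ne_of_eq_zero (f := (js[·]?)) (g := (js'[·]?))
    (hstart.trans hstart'.symm) hlast
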